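/- For every integer n ≥ 3, the prism graph C_n × P_2 admits a super vertex-antimagic total labeling, i.e. a bijection f : V ∪ E → {1,...,5n} with f(V)={1,...,2n} such that all vertex-weights f(v)+Σ_{u∈N(v)} f(uv) are pairwise distinct. -/
import Mathlib


open Sum

/-- The weight of an edge `e` under a total labeling `f` of the graph `G`:
the label of `e` plus the labels of its two endpoints. -/
noncomputable def edgeWt {V : Type*} (G : SimpleGraph V) (f : V ⊕ G.edgeSet → ℕ)
    (e : G.edgeSet) : ℕ :=
  f (inr e) + ∑ᶠ (v : V) (_ : v ∈ (e : Sym2 V)), f (inl v)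

/-- The weight of a vertex `v` under a total labeling `f` of the graph `G`:
the label of `v` plus the labels of all edges incident with `v`. -/
noncomputable def vertexWt {V : Type*} (G : SimpleGraph V) (f : V ⊕ G.edgeSet → ℕ)
    (v : V) : ℕ :=
  f (inl v) + ∑ᶠ (e : G.edgeSet) (_ : v ∈ (e : Sym2 V)), f (inr e)

/-- The prism `C_n × P_2`, with vertices `u_i = inl i` and `v_i = inr i`
(`i` running over `Fin n`), cycle edges `u_i u_{i+1}`, `v_i v_{i+1}` (indices mod `n`)
and spokes `u_i v_i`. -/
def prism (n : ℕ) : SimpleGraph (Fin n ⊕ Fin n) :=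
  SimpleGraph.fromRel (fun a b =>
    (∃ p q : Fin n, ((p : ℕ) + 1) % n = (q : ℕ) ∧ a = inl p ∧ b = inl q) ∨
    (∃ p q : Fin n, ((p : ℕ) + 1) % n = (q : ℕ) ∧ a = inr p ∧ b = inr q) ∨
    (∃ p : Fin n, a = inl p ∧ b = inr p))

namespace PrismVAT

variable {n : ℕ}

/-- the permutation used for spoke labels -/
def t (n : ℕ) (i : Fin n) : ℕ := if n % 2 = 0 ∧ (i : ℕ) < 2 then 1 - (i : ℕ) else (i : ℕ)

lemma t_lt (hn : 3 ≤ n) (i : Fin n) : t n i < n := by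
  have := i.isLt; unfold t; split_ifs <;> omega

lemma t_inj (i j : Fin n) (h : t n i = t n j) : i = j := by
  have hi := i.isLt; have hj := j.isLt
  unfold t at h; apply Fin.ext; split_ifs at h <;> omega

lemma t_surj (hn : 3 ≤ n) {m : ℕ} (hm : m < n) : ∃ i : Fin n, t n i = m := by
  by_cases h : n % 2 = 0 ∧ m < 2
  · refine ⟨⟨1 - m, by omega⟩, ?_⟩
    show (if n % 2 = 0 ∧ 1 - m < 2 then 1 - (1 - m) else 1 - m) = m
    split_ifs <;> omega
  · refine ⟨⟨m, hm⟩, ?_⟩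
    show (if n % 2 = 0 ∧ m < 2 then 1 - m else m) = m
    split_ifs <;> omega

section
variable (n) [NeZero n]

/-- index type of edges : cycle-u edges, cycle-v edges, spokes -/
abbrev K := Fin n ⊕ (Fin n ⊕ Fin n)

/-- edge labels -/
def lab : K n → ℕ
  | inl i => 2 * n + 1 + (i : ℕ)
  | inr (inl i) => 4 * n + 1 + (i : ℕ)
  | inr (inr i) => 3 * n + 1 + t n i

/-- the edges -/
def E : K n → Sym2 (Fin n ⊕ Fin n)
  | inl i => s(inl i, inl (i + 1))
  | inr (inl i) => s(inr i, inr (i + 1))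
  | inr (inr i) => s(inl i, inr i)

end

variable [NeZero n]

lemma val_add_one (hn : 3 ≤ n) (i : Fin n) : ((i + 1 : Fin n) : ℕ) = ((i : ℕ) + 1) % n := by
  rw [Fin.add_def, Fin.val_one']
  simp only
  rw [Nat.mod_eq_of_lt (show 1 < n by omega)]

lemma succ_mod (hn : 3 ≤ n) (i : Fin n) :
    ((i : ℕ) + 1) % n = if (i : ℕ) + 1 = n then 0 else (i : ℕ) + 1 := by
  have := i.isLt
  split_ifs with h
  · simp [h]
  · exact Nat.mod_eq_of_lt (by omega)

lemma val_sub_one (hn : 3 ≤ n) (i : Fin n) :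
    ((i - 1 : Fin n) : ℕ) = if (i : ℕ) = 0 then n - 1 else (i : ℕ) - 1 := by
  rw [Fin.sub_def, Fin.val_one']
  simp only
  have hi := i.isLt
  have h2 : 1 % n = 1 := Nat.mod_eq_of_lt (by omega)
  rw [h2]
  split_ifs with h
  · rw [h, Nat.add_zero]
    exact Nat.mod_eq_of_lt (by omega)
  · have h3 : n - 1 + (i:ℕ) = n + ((i:ℕ) - 1) := by omega
    rw [h3, Nat.add_mod_left]
    exact Nat.mod_eq_of_lt (by omega)

lemma succ_ne (hn : 3 ≤ n) (i : Fin n) : i + 1 ≠ i := by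
  intro h
  have h2 := congrArg Fin.val h
  rw [val_add_one hn, succ_mod hn] at h2
  have := i.isLt
  split_ifs at h2 <;> omega

lemma rel_succ (hn : 3 ≤ n) {p q : Fin n} (h : ((p : ℕ) + 1) % n = (q : ℕ)) : q = p + 1 := by
  apply Fin.ext
  rw [val_add_one hn, h]

lemma E_mem (hn : 3 ≤ n) (k : K n) : E n k ∈ (prism n).edgeSet := by
  have hmod : ∀ i : Fin n, ((i : ℕ) + 1) % n = ((i + 1 : Fin n) : ℕ) := fun i =>
    (val_add_one hn i).symm
  cases k with
  | inl i =>
      show s(inl i, inl (i+1)) ∈ _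
      rw [SimpleGraph.mem_edgeSet, prism, SimpleGraph.fromRel_adj]
      exact ⟨by simp [(succ_ne hn i).symm], Or.inl (Or.inl ⟨i, i + 1, hmod i, rfl, rfl⟩)⟩
  | inr k =>
    cases k with
    | inl i =>
        show s(inr i, inr (i+1)) ∈ _
        rw [SimpleGraph.mem_edgeSet, prism, SimpleGraph.fromRel_adj]
        exact ⟨by simp [(succ_ne hn i).symm], Or.inl (Or.inr (Or.inl ⟨i, i + 1, hmod i, rfl, rfl⟩))⟩
    | inr i =>
        show s(inl i, inr i) ∈ _
        rw [SimpleGraph.mem_edgeSet, prism, SimpleGraph.fromRel_adj]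
        exact ⟨by simp, Or.inl (Or.inr (Or.inr ⟨i, rfl, rfl⟩))⟩

lemma E_surj (hn : 3 ≤ n) (e : Sym2 (Fin n ⊕ Fin n)) (he : e ∈ (prism n).edgeSet) :
    ∃ k : K n, E n k = e := by
  induction e with
  | _ a b =>
    rw [SimpleGraph.mem_edgeSet, prism, SimpleGraph.fromRel_adj] at he
    obtain ⟨-, h | h⟩ := he
    · rcases h with ⟨p, q, hpq, rfl, rfl⟩ | ⟨p, q, hpq, rfl, rfl⟩ | ⟨p, rfl, rfl⟩
      · obtain rfl := rel_succ hn hpq; exact ⟨inl p, rfl⟩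
      · obtain rfl := rel_succ hn hpq; exact ⟨inr (inl p), rfl⟩
      · exact ⟨inr (inr p), rfl⟩
    · rcases h with ⟨p, q, hpq, rfl, rfl⟩ | ⟨p, q, hpq, rfl, rfl⟩ | ⟨p, rfl, rfl⟩
      · obtain rfl := rel_succ hn hpq; exact ⟨inl p, Sym2.eq_swap⟩
      · obtain rfl := rel_succ hn hpq; exact ⟨inr (inl p), Sym2.eq_swap⟩
      · exact ⟨inr (inr p), Sym2.eq_swap⟩

lemma E_inj (hn : 3 ≤ n) : Function.Injective (E n) := by
  have key : ∀ i j : Fin n, i = j + 1 → j = i + 1 → False := by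
    intro i j h1 h2
    have ha := congrArg Fin.val h1
    have hb := congrArg Fin.val h2
    rw [val_add_one hn, succ_mod hn] at ha hb
    have hi := i.isLt
    have hj := j.isLt
    split_ifs at ha hb <;> omega
  intro k k' h
  cases k with
  | inl i => cases k' with
    | inl j =>
        simp only [E, Sym2.eq_iff] at h
        rcases h with ⟨h1, h2⟩ | ⟨h1, h2⟩
        · rw [inl.injEq] at h1; rw [h1]
        · rw [inl.injEq] at h1 h2
          exact (key i j h1 h2.symm).elim
    | inr j => cases j with
      | inl j => simp only [E, Sym2.eq_iff] at h; simp at h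
      | inr j => simp only [E, Sym2.eq_iff] at h; simp at h
  | inr k => cases k with
    | inl i => cases k' with
      | inl j => simp only [E, Sym2.eq_iff] at h; simp at h
      | inr j => cases j with
        | inl j =>
            simp only [E, Sym2.eq_iff] at h
            rcases h with ⟨h1, h2⟩ | ⟨h1, h2⟩
            · rw [inr.injEq] at h1; rw [h1]
            · rw [inr.injEq] at h1 h2
              exact (key i j h1 h2.symm).elim
        | inr j => simp only [E, Sym2.eq_iff] at h; simp at h
    | inr i => cases k' with
      | inl j => simp only [E, Sym2.eq_iff] at h; simp at h
      | inr j => cases j with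
        | inl j => simp only [E, Sym2.eq_iff] at h; simp at h
        | inr j =>
            simp only [E, Sym2.eq_iff] at h
            rcases h with ⟨h1, h2⟩ | ⟨h1, h2⟩
            · rw [inl.injEq] at h1; rw [h1]
            · simp at h1

lemma lab_lt (hn : 3 ≤ n) (k : K n) : 2 * n + 1 ≤ lab n k ∧ lab n k ≤ 5 * n := by
  cases k with
  | inl i => have := i.isLt; simp only [lab]; omega
  | inr k => cases k with
    | inl i => have := i.isLt; simp only [lab]; omega
    | inr i => have := t_lt hn i; simp only [lab]; omega

lemma lab_inj (hn : 3 ≤ n) : Function.Injective (lab n) := by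
  intro k k' h
  cases k with
  | inl i => cases k' with
    | inl j => simp only [lab] at h; exact congrArg inl (Fin.ext (by omega))
    | inr j => cases j with
      | inl j => simp only [lab] at h; have := i.isLt; have := j.isLt; omega
      | inr j => simp only [lab] at h; have := i.isLt; have := t_lt hn j; omega
  | inr k => cases k with
    | inl i => cases k' with
      | inl j => simp only [lab] at h; have := i.isLt; have := j.isLt; omega
      | inr j => cases j with
        | inl j => simp only [lab] at h; exact congrArg (inr ∘ inl) (Fin.ext (by omega))
        | inr j => simp only [lab] at h; have := i.isLt; have := t_lt hn j; omega
    | inr i => cases k' with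
      | inl j => simp only [lab] at h; have := j.isLt; have := t_lt hn i; omega
      | inr j => cases j with
        | inl j => simp only [lab] at h; have := j.isLt; have := t_lt hn i; omega
        | inr j =>
            simp only [lab] at h
            exact congrArg (inr ∘ inr) (t_inj i j (by omega))



noncomputable def f (n : ℕ) [NeZero n] : (Fin n ⊕ Fin n) ⊕ (prism n).edgeSet → ℕ
  | inl (inl i) => (i : ℕ) + 1
  | inl (inr i) => n + (i : ℕ) + 1
  | inr e => ∑ k : K n, if E n k = (e : Sym2 (Fin n ⊕ Fin n)) then lab n k else 0

lemma f_edge (hn : 3 ≤ n) (k : K n) (h : E n k ∈ (prism n).edgeSet) :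
    f n (inr ⟨E n k, h⟩) = lab n k := by
  show (∑ k' : K n, if E n k' = E n k then lab n k' else 0) = lab n k
  simp only [(E_inj hn).eq_iff]
  rw [Finset.sum_ite_eq' Finset.univ k (lab n)]
  simp

lemma f_edge' (hn : 3 ≤ n) (e : (prism n).edgeSet) :
    ∃ k : K n, (e : Sym2 (Fin n ⊕ Fin n)) = E n k ∧ f n (inr e) = lab n k := by
  obtain ⟨k, hk⟩ := E_surj hn (e : Sym2 (Fin n ⊕ Fin n)) e.2
  refine ⟨k, hk.symm, ?_⟩
  have he : e = ⟨E n k, E_mem hn k⟩ := Subtype.ext hk.symm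
  rw [he, f_edge hn]

lemma vertexWt_eq (hn : 3 ≤ n) (v : Fin n ⊕ Fin n) :
    vertexWt (prism n) (f n) v =
      f n (inl v) + ∑ k : K n, (if v ∈ E n k then lab n k else 0) := by
  unfold vertexWt
  congr 1
  haveI : Fintype (prism n).edgeSet := Fintype.ofFinite _
  classical
  have h1 : ∀ e : (prism n).edgeSet,
      (∑ᶠ (_ : v ∈ (e : Sym2 (Fin n ⊕ Fin n))), f n (inr e)) =
      if v ∈ (e : Sym2 (Fin n ⊕ Fin n)) then f n (inr e) else 0 := fun e => finsum_eq_if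
  rw [finsum_congr h1, finsum_eq_sum_of_fintype]
  refine (Fintype.sum_bijective (fun k : K n => (⟨E n k, E_mem hn k⟩ : (prism n).edgeSet))
    ⟨fun a b hab => E_inj hn (congrArg Subtype.val hab), fun e => ?_⟩ _ _ fun k => ?_).symm
  · obtain ⟨k, hk⟩ := E_surj hn (e : Sym2 (Fin n ⊕ Fin n)) e.2
    exact ⟨k, Subtype.ext hk⟩
  · by_cases hv : v ∈ E n k
    · rw [if_pos hv, if_pos hv, f_edge hn]
    · rw [if_neg hv, if_neg hv]

lemma ne_sub_one (hn : 3 ≤ n) (i : Fin n) : i ≠ i - 1 := by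
  intro h
  have h2 := congrArg Fin.val h
  rw [val_sub_one hn] at h2
  have := i.isLt
  split_ifs at h2 <;> omega

lemma sum_ite_or (g : Fin n → ℕ) (a b : Fin n) (hab : a ≠ b) :
    (∑ j : Fin n, if j = a ∨ j = b then g j else 0) = g a + g b := by
  have key : ∀ j : Fin n, (if j = a ∨ j = b then g j else 0) =
      (if j = a then g j else 0) + (if j = b then g j else 0) := by
    intro j
    by_cases h1 : j = a
    · subst h1
      rw [if_pos (Or.inl rfl), if_pos rfl, if_neg (fun h => hab h), Nat.add_zero]
    · by_cases h2 : j = b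
      · subst h2
        rw [if_pos (Or.inr rfl), if_neg h1, if_pos rfl, Nat.zero_add]
      · rw [if_neg (by tauto), if_neg h1, if_neg h2]
    
  rw [Finset.sum_congr rfl (fun j _ => key j), Finset.sum_add_distrib,
    Finset.sum_ite_eq' Finset.univ a g, Finset.sum_ite_eq' Finset.univ b g]
  simp

lemma wt_u (hn : 3 ≤ n) (i : Fin n) :
    vertexWt (prism n) (f n) (inl i) =
      7 * n + 4 + (2 * (i : ℕ) + ((i - 1 : Fin n) : ℕ) + t n i) := by
  rw [vertexWt_eq hn, Fintype.sum_sum_type, Fintype.sum_sum_type]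
  have c1 : ∀ j : Fin n, ((inl i : Fin n ⊕ Fin n) ∈ E n (inl j)) ↔ (j = i ∨ j = i - 1) := by
    intro j
    simp only [E, Sym2.mem_iff, inl.injEq, reduceCtorEq, or_false]
    constructor
    · rintro (h | h)
      · exact Or.inl h.symm
      · exact Or.inr (eq_sub_iff_add_eq.mpr h.symm)
    · rintro (rfl | rfl)
      · exact Or.inl rfl
      · exact Or.inr (by rw [sub_add_cancel])
  have c2 : ∀ j : Fin n, ¬ ((inl i : Fin n ⊕ Fin n) ∈ E n (inr (inl j))) := by
    intro j
    simp [E, Sym2.mem_iff]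
  have c3 : ∀ j : Fin n, ((inl i : Fin n ⊕ Fin n) ∈ E n (inr (inr j))) ↔ (j = i) := by
    intro j
    simp only [E, Sym2.mem_iff, inl.injEq, reduceCtorEq, or_false]
    exact eq_comm
  have s1 : (∑ j : Fin n, if (inl i : Fin n ⊕ Fin n) ∈ E n (inl j) then lab n (inl j) else 0)
      = lab n (inl i) + lab n (inl (i - 1)) := by
    simp only [c1]
    exact sum_ite_or (fun j => lab n (inl j)) i (i - 1) (ne_sub_one hn i)
  have s2 : (∑ j : Fin n, if (inl i : Fin n ⊕ Fin n) ∈ E n (inr (inl j))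
      then lab n (inr (inl j)) else 0) = 0 := by
    simp only [c2, if_false]
    simp
  have s3 : (∑ j : Fin n, if (inl i : Fin n ⊕ Fin n) ∈ E n (inr (inr j))
      then lab n (inr (inr j)) else 0) = lab n (inr (inr i)) := by
    simp only [c3]
    rw [Finset.sum_ite_eq' Finset.univ i (fun j => lab n (inr (inr j)))]
    simp
  rw [s1, s2, s3]
  show ((i:ℕ) + 1) + (2 * n + 1 + (i:ℕ) + (2 * n + 1 + ((i-1 : Fin n):ℕ)) + (0 + (3 * n + 1 + t n i))) = _
  ring

lemma wt_v (hn : 3 ≤ n) (i : Fin n) :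
    vertexWt (prism n) (f n) (inr i) =
      12 * n + 4 + (2 * (i : ℕ) + ((i - 1 : Fin n) : ℕ) + t n i) := by
  rw [vertexWt_eq hn, Fintype.sum_sum_type, Fintype.sum_sum_type]
  have c1 : ∀ j : Fin n, ¬ ((inr i : Fin n ⊕ Fin n) ∈ E n (inl j)) := by
    intro j
    simp [E, Sym2.mem_iff]
  have c2 : ∀ j : Fin n, ((inr i : Fin n ⊕ Fin n) ∈ E n (inr (inl j))) ↔ (j = i ∨ j = i - 1) := by
    intro j
    simp only [E, Sym2.mem_iff, inr.injEq, reduceCtorEq, or_false]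
    constructor
    · rintro (h | h)
      · exact Or.inl h.symm
      · exact Or.inr (eq_sub_iff_add_eq.mpr h.symm)
    · rintro (rfl | rfl)
      · exact Or.inl rfl
      · exact Or.inr (by rw [sub_add_cancel])
  have c3 : ∀ j : Fin n, ((inr i : Fin n ⊕ Fin n) ∈ E n (inr (inr j))) ↔ (j = i) := by
    intro j
    simp only [E, Sym2.mem_iff, inr.injEq, reduceCtorEq, false_or]
    exact eq_comm
  have s1 : (∑ j : Fin n, if (inr i : Fin n ⊕ Fin n) ∈ E n (inl j) then lab n (inl j) else 0)
      = 0 := by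
    simp only [c1, if_false]
    simp
  have s2 : (∑ j : Fin n, if (inr i : Fin n ⊕ Fin n) ∈ E n (inr (inl j))
      then lab n (inr (inl j)) else 0) = lab n (inr (inl i)) + lab n (inr (inl (i - 1))) := by
    simp only [c2]
    exact sum_ite_or (fun j => lab n (inr (inl j))) i (i - 1) (ne_sub_one hn i)
  have s3 : (∑ j : Fin n, if (inr i : Fin n ⊕ Fin n) ∈ E n (inr (inr j))
      then lab n (inr (inr j)) else 0) = lab n (inr (inr i)) := by
    simp only [c3]
    rw [Finset.sum_ite_eq' Finset.univ i (fun j => lab n (inr (inr j)))]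
    simp
  rw [s1, s2, s3]
  show (n + (i:ℕ) + 1) + (0 + ((4 * n + 1 + (i:ℕ) + (4 * n + 1 + ((i-1 : Fin n):ℕ))) + (3 * n + 1 + t n i))) = _
  ring

lemma W_inj (hn : 3 ≤ n) (i j : Fin n)
    (h : 2 * (i : ℕ) + ((i - 1 : Fin n) : ℕ) + t n i
       = 2 * (j : ℕ) + ((j - 1 : Fin n) : ℕ) + t n j) : i = j := by
  have hi := i.isLt
  have hj := j.isLt
  rw [val_sub_one hn i, val_sub_one hn j] at h
  unfold t at h
  apply Fin.ext
  split_ifs at h <;> omega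

lemma W_lt (hn : 3 ≤ n) (i : Fin n) :
    2 * (i : ℕ) + ((i - 1 : Fin n) : ℕ) + t n i < 5 * n := by
  have hi := i.isLt
  have h1 := (i - 1 : Fin n).isLt
  have h2 := t_lt hn i
  omega

end PrismVAT

open PrismVAT in
/-- For every `n ≥ 3` the prism `C_n × P_2` admits a super vertex-antimagic total labeling. -/
theorem prism_super_VAT (n : ℕ) (hn : 3 ≤ n) :
    ∃ f : (Fin n ⊕ Fin n) ⊕ (prism n).edgeSet → ℕ,
      Set.BijOn f Set.univ (Set.Icc 1 (5 * n)) ∧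
      Set.BijOn (fun v => f (inl v)) Set.univ (Set.Icc 1 (2 * n)) ∧
      Function.Injective (vertexWt (prism n) f) := by
  haveI : NeZero n := ⟨by omega⟩
  refine ⟨PrismVAT.f n, ⟨?_, ?_, ?_⟩, ⟨?_, ?_, ?_⟩, ?_⟩
  · -- MapsTo
    rintro ((i | i) | e) -
    · have := i.isLt
      rw [Set.mem_Icc]
      show 1 ≤ (i : ℕ) + 1 ∧ (i : ℕ) + 1 ≤ 5 * n
      omega
    · have := i.isLt
      rw [Set.mem_Icc]
      show 1 ≤ n + (i : ℕ) + 1 ∧ n + (i : ℕ) + 1 ≤ 5 * n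
      omega
    · obtain ⟨k, hk, hfk⟩ := f_edge' hn e
      rw [Set.mem_Icc, hfk]
      have := lab_lt hn k
      omega
  · -- InjOn
    rintro ((i | i) | e) - ((j | j) | e') - h
    · have : i = j := Fin.ext (by have h2 : (i:ℕ) + 1 = (j:ℕ) + 1 := h; omega)
      rw [this]
    · have hi := i.isLt
      have h2 : (i:ℕ) + 1 = n + (j:ℕ) + 1 := h
      omega
    · obtain ⟨k, hk, hfk⟩ := f_edge' hn e'
      rw [hfk] at h
      have h2 : (i:ℕ) + 1 = lab n k := h
      have := lab_lt hn k
      have := i.isLt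
      omega
    · have hj := j.isLt
      have h2 : n + (i:ℕ) + 1 = (j:ℕ) + 1 := h
      omega
    · have : i = j := Fin.ext (by have h2 : n + (i:ℕ) + 1 = n + (j:ℕ) + 1 := h; omega)
      rw [this]
    · obtain ⟨k, hk, hfk⟩ := f_edge' hn e'
      rw [hfk] at h
      have h2 : n + (i:ℕ) + 1 = lab n k := h
      have := lab_lt hn k
      have := i.isLt
      omega
    · obtain ⟨k, hk, hfk⟩ := f_edge' hn e
      rw [hfk] at h
      have h2 : lab n k = (j:ℕ) + 1 := h.symm ▸ rfl
      have := lab_lt hn k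
      have := j.isLt
      omega
    · obtain ⟨k, hk, hfk⟩ := f_edge' hn e
      rw [hfk] at h
      have h2 : lab n k = n + (j:ℕ) + 1 := h
      have := lab_lt hn k
      have := j.isLt
      omega
    · obtain ⟨k, hk, hfk⟩ := f_edge' hn e
      obtain ⟨k', hk', hfk'⟩ := f_edge' hn e'
      rw [hfk, hfk'] at h
      have : k = k' := lab_inj hn h
      exact congrArg inr (Subtype.ext (by rw [hk, hk', this]))
  · -- SurjOn
    intro m hm
    rw [Set.mem_Icc] at hm
    by_cases h1 : m ≤ n
    · exact ⟨inl (inl ⟨m - 1, by omega⟩), Set.mem_univ _,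
        by show m - 1 + 1 = m; omega⟩
    by_cases h2 : m ≤ 2 * n
    · exact ⟨inl (inr ⟨m - n - 1, by omega⟩), Set.mem_univ _,
        by show n + (m - n - 1) + 1 = m; omega⟩
    by_cases h3 : m ≤ 3 * n
    · refine ⟨inr ⟨E n (inl ⟨m - (2 * n + 1), by omega⟩), E_mem hn _⟩, Set.mem_univ _, ?_⟩
      rw [f_edge hn]
      show 2 * n + 1 + (m - (2 * n + 1)) = m
      omega
    by_cases h4 : m ≤ 4 * n
    · obtain ⟨i, hti⟩ := t_surj hn (show m - (3 * n + 1) < n by omega)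
      refine ⟨inr ⟨E n (inr (inr i)), E_mem hn _⟩, Set.mem_univ _, ?_⟩
      rw [f_edge hn]
      show 3 * n + 1 + t n i = m
      omega
    · refine ⟨inr ⟨E n (inr (inl ⟨m - (4 * n + 1), by omega⟩)), E_mem hn _⟩, Set.mem_univ _, ?_⟩
      rw [f_edge hn]
      show 4 * n + 1 + (m - (4 * n + 1)) = m
      omega
  · -- vertex MapsTo
    rintro (i | i) -
    · have := i.isLt
      rw [Set.mem_Icc]
      show 1 ≤ (i : ℕ) + 1 ∧ (i : ℕ) + 1 ≤ 2 * n
      omega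
    · have := i.isLt
      rw [Set.mem_Icc]
      show 1 ≤ n + (i : ℕ) + 1 ∧ n + (i : ℕ) + 1 ≤ 2 * n
      omega
  · -- vertex InjOn
    rintro (i | i) - (j | j) - h
    · have : i = j := Fin.ext (by have h2 : (i:ℕ) + 1 = (j:ℕ) + 1 := h; omega)
      rw [this]
    · have hi := i.isLt
      have h2 : (i:ℕ) + 1 = n + (j:ℕ) + 1 := h
      omega
    · have hj := j.isLt
      have h2 : n + (i:ℕ) + 1 = (j:ℕ) + 1 := h
      omega
    · have : i = j := Fin.ext (by have h2 : n + (i:ℕ) + 1 = n + (j:ℕ) + 1 := h; omega)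
      rw [this]
  · -- vertex SurjOn
    intro m hm
    rw [Set.mem_Icc] at hm
    by_cases h1 : m ≤ n
    · exact ⟨inl ⟨m - 1, by omega⟩, Set.mem_univ _, by show m - 1 + 1 = m; omega⟩
    · exact ⟨inr ⟨m - n - 1, by omega⟩, Set.mem_univ _, by show n + (m - n - 1) + 1 = m; omega⟩
  · -- vertexWt injective
    intro v w h
    obtain i | i := v <;> obtain j | j := w
    · rw [wt_u hn, wt_u hn] at h
      exact congrArg inl (W_inj hn i j (by omega))
    · rw [wt_u hn, wt_v hn] at h
      have := W_lt hn i
      exact (by omega : False).elim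
    · rw [wt_v hn, wt_u hn] at h
      have := W_lt hn j
      exact (by omega : False).elim
    · rw [wt_v hn, wt_v hn] at h
      exact congrArg inr (W_inj hn i j (by omega))
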